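/- Let G be a group. Suppose either (a) there exists an odd positive integer k such that (g ⊗ g)^k = 1 in G ⊗ G for all g ∈ G, or (b) there exists an even positive integer n such that every element of G is an n-th power in G. Then ∇(G) = Δ(G); consequently J̃(G) ≅ M(G), i.e. π₂ˢ(K(G,1)) ≅ H₂(G). In particular, if G has odd exponent then π₂ˢ(K(G,1)) ≅ H₂(G). -/

import Mathlib

/- Nonabelian tensor square framework (Brown–Loday). -/

namespace NATensor

variable (G : Type*) [Group G]

/-- The relator set for the nonabelian tensor square of `G`:
`g g' ⊗ h = (ᵍg' ⊗ ᵍh)(g ⊗ h)` and `g ⊗ h h' = (g ⊗ h)(ʰg ⊗ ʰh')`. -/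
def rels : Set (FreeGroup (G × G)) :=
  {r | (∃ g g' h : G,
          r = FreeGroup.of (g * g', h) *
              (FreeGroup.of (g * g' * g⁻¹, g * h * g⁻¹) * FreeGroup.of (g, h))⁻¹) ∨
       (∃ g h h' : G,
          r = FreeGroup.of (g, h * h') *
              (FreeGroup.of (g, h) * FreeGroup.of (h * g * h⁻¹, h * h' * h⁻¹))⁻¹)}

/-- The nonabelian tensor square `G ⊗ G`. -/
abbrev TS := PresentedGroup (rels G)

variable {G}

/-- The generator `g ⊗ h` of the nonabelian tensor square. -/
def tmul (g h : G) : TS G := PresentedGroup.of (g, h)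

lemma mk_rel_eq_one {r : FreeGroup (G × G)} (hr : r ∈ rels G) :
    (PresentedGroup.mk (rels G) r : TS G) = 1 :=
  (QuotientGroup.eq_one_iff r).mpr (Subgroup.subset_normalClosure hr)

lemma tmul_rel₁ (g g' h : G) :
    tmul (g * g') h = tmul (g * g' * g⁻¹) (g * h * g⁻¹) * tmul g h := by
  have h1 := mk_rel_eq_one (G := G) (Or.inl ⟨g, g', h, rfl⟩)
  simp only [map_mul, map_inv, mul_inv_eq_one] at h1
  exact h1

lemma tmul_rel₂ (g h h' : G) :
    tmul g (h * h') = tmul g h * tmul (h * g * h⁻¹) (h * h' * h⁻¹) := by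
  have h1 := mk_rel_eq_one (G := G) (Or.inr ⟨g, h, h', rfl⟩)
  simp only [map_mul, map_inv, mul_inv_eq_one] at h1
  exact h1

variable (G)

/-- The homomorphism `κ : G ⊗ G → G`, `g ⊗ h ↦ [g,h] = g h g⁻¹ h⁻¹` (its image is `[G,G]`). -/
def kappa : TS G →* G :=
  PresentedGroup.toGroup (f := fun x : G × G => x.1 * x.2 * x.1⁻¹ * x.2⁻¹) (by
    rintro r (⟨g, g', h, rfl⟩ | ⟨g, h, h', rfl⟩) <;>
      simp only [map_mul, map_inv, FreeGroup.lift_apply_of] <;> group)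

variable {G}

@[simp] lemma kappa_tmul (g h : G) : kappa G (tmul g h) = g * h * g⁻¹ * h⁻¹ :=
  PresentedGroup.toGroup.of _

variable (G)

/-- `J(G) = ker κ ≅ π₃(SK(G,1))`. -/
def J : Subgroup (TS G) := (kappa G).ker

/-- `∇(G)`: the (normal) subgroup of `G ⊗ G` generated by the elements `x ⊗ x`. -/
def nabla : Subgroup (TS G) :=
  Subgroup.normalClosure {t | ∃ x : G, t = tmul x x}

/-- `Δ(G)`: the (normal) subgroup of `G ⊗ G` generated by the `(x ⊗ y)(y ⊗ x)`. -/
def delta : Subgroup (TS G) :=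
  Subgroup.normalClosure {t | ∃ x y : G, t = tmul x y * tmul y x}

instance : (nabla G).Normal := Subgroup.normalClosure_normal

instance : (delta G).Normal := Subgroup.normalClosure_normal

/-- The exterior square `G ∧ G = (G ⊗ G)/∇(G)`. -/
abbrev ES := TS G ⧸ nabla G

/-- The symmetric square `G ⊗̃ G = (G ⊗ G)/Δ(G)`. -/
abbrev SS := TS G ⧸ delta G

variable {G}

/-- The element `g ∧ h` of the exterior square. -/
def emul (g h : G) : ES G := QuotientGroup.mk' (nabla G) (tmul g h)

/-- The image of `g ⊗ h` in the symmetric square. -/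
def smul (g h : G) : SS G := QuotientGroup.mk' (delta G) (tmul g h)

variable {H : Type*} [Group H]

/-- The induced homomorphism `G ⊗ G → H ⊗ H` of a homomorphism `f : G → H`. -/
def tmap (f : G →* H) : TS G →* TS H :=
  PresentedGroup.toGroup (f := fun x : G × G => tmul (f x.1) (f x.2)) (by
    rintro r (⟨g, g', h, rfl⟩ | ⟨g, h, h', rfl⟩) <;>
      simp only [map_mul, map_inv, FreeGroup.lift_apply_of, mul_inv_eq_one]
    · rw [tmul_rel₁]
    · rw [tmul_rel₂])

@[simp] lemma tmap_tmul (f : G →* H) (g h : G) :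
    tmap f (tmul g h) = tmul (f g) (f h) :=
  PresentedGroup.toGroup.of _

lemma nabla_le_comap_nabla (f : G →* H) :
    nabla G ≤ MonoidHom.ker ((QuotientGroup.mk' (nabla H)).comp (tmap f)) := by
  refine Subgroup.normalClosure_le_normal ?_
  rintro _ ⟨y, rfl⟩
  simp only [SetLike.mem_coe, MonoidHom.mem_ker, MonoidHom.comp_apply, tmap_tmul,
    QuotientGroup.mk'_apply, QuotientGroup.eq_one_iff]
  exact Subgroup.subset_normalClosure ⟨f y, rfl⟩

lemma delta_le_comap_delta (f : G →* H) :
    delta G ≤ MonoidHom.ker ((QuotientGroup.mk' (delta H)).comp (tmap f)) := by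
  refine Subgroup.normalClosure_le_normal ?_
  rintro _ ⟨x, y, rfl⟩
  simp only [SetLike.mem_coe, MonoidHom.mem_ker, MonoidHom.comp_apply, map_mul, tmap_tmul,
    QuotientGroup.mk'_apply, ← QuotientGroup.mk_mul, QuotientGroup.eq_one_iff]
  exact Subgroup.subset_normalClosure ⟨f x, f y, rfl⟩

/-- The induced homomorphism `G ∧ G → H ∧ H` of a homomorphism `f : G → H`. -/
def emap (f : G →* H) : ES G →* ES H :=
  QuotientGroup.lift (nabla G) ((QuotientGroup.mk' (nabla H)).comp (tmap f))
    (fun x hx => MonoidHom.mem_ker.mp (nabla_le_comap_nabla f hx))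

@[simp] lemma emap_emul (f : G →* H) (g h : G) :
    emap f (emul g h) = emul (f g) (f h) := by
  simp [emap, emul, QuotientGroup.mk'_apply, QuotientGroup.lift_mk'] <;>
    exact congrArg _ (tmap_tmul f g h)

/-- The induced homomorphism `G ⊗̃ G → H ⊗̃ H` of a homomorphism `f : G → H`. -/
def smap (f : G →* H) : SS G →* SS H :=
  QuotientGroup.lift (delta G) ((QuotientGroup.mk' (delta H)).comp (tmap f))
    (fun x hx => MonoidHom.mem_ker.mp (delta_le_comap_delta f hx))

variable (G)

lemma nabla_le_ker_kappa : nabla G ≤ (kappa G).ker := by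
  refine Subgroup.normalClosure_le_normal ?_
  rintro _ ⟨x, rfl⟩
  simp only [SetLike.mem_coe, MonoidHom.mem_ker, kappa_tmul]
  group

/-- The homomorphism `κ' : G ∧ G → G`, `g ∧ h ↦ [g,h]` (its image is `[G,G]`). -/
def kappa' : ES G →* G :=
  QuotientGroup.lift (nabla G) (kappa G)
    (fun x hx => MonoidHom.mem_ker.mp (nabla_le_ker_kappa G hx))

/-- The Schur multiplier `M(G) = ker κ' ≅ H₂(G)`. -/
def M : Subgroup (ES G) := (kappa' G).ker

/-- `J̃(G) = J(G)/Δ(G) ≅ π₂ˢ(K(G,1))`, realized as the image of `J(G)` in `G ⊗̃ G`. -/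
def Jt : Subgroup (SS G) := Subgroup.map (QuotientGroup.mk' (delta G)) (J G)

/-- `∇(G)/Δ(G)`, realized as the image of `∇(G)` in `G ⊗̃ G`. -/
def nablaBar : Subgroup (SS G) := Subgroup.map (QuotientGroup.mk' (delta G)) (nabla G)

end NATensor

/-!
`Δ(G) ≤ ∇(G)` always: expanding `ab ⊗ ab` with the two defining relations gives
`(a ⊗ b)(ᵇa ⊗ ᵇa)(b ⊗ a)(ᵃb ⊗ ᵃb)`, so `(a ⊗ b)(b ⊗ a) ≡ 1` modulo `∇(G)`.
Conversely `Δ(G)` contains `(g ⊗ g)²`, hence contains `g ⊗ g` whenever `g ⊗ g` has odd order;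
and `xⁿ ⊗ xⁿ = (x ⊗ x)^(n²)` lies in `Δ(G)` when `n` is even.
Once `∇(G) = Δ(G)`, both `J̃(G)` and `M(G) = ker κ' = J(G)/∇(G)` are the image of `J(G)` in the
same quotient of `G ⊗ G`.
-/

theorem Subgroup.mem_of_mul_self_mem_of_pow_odd {G : Type*} [Group G] {H : Subgroup G} {t : G}
    {k : ℕ} (hk : Odd k) (htk : t ^ k = 1) (htt : t * t ∈ H) : t ∈ H := by
  obtain ⟨m, rfl⟩ := hk
  have ht : t = (t * t) ^ (m + 1) := by
    rw [← sq, ← pow_mul, show 2 * (m + 1) = (2 * m + 1) + 1 by ring, pow_succ, htk, one_mul]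
  rw [ht]
  exact pow_mem htt _

theorem Subgroup.nonempty_map_mk'_mulEquiv_of_eq {G : Type*} [Group G] {N N' : Subgroup G}
    [N.Normal] [N'.Normal] (h : N = N') (K : Subgroup G) :
    Nonempty (K.map (QuotientGroup.mk' N) ≃* K.map (QuotientGroup.mk' N')) := by
  subst h
  exact ⟨.refl _⟩

namespace NATensor

variable {G : Type*} [Group G]

theorem tmul_one (g : G) : tmul g (1 : G) = 1 := by
  have h := tmul_rel₂ g 1 1
  simp only [one_mul, mul_one, inv_one] at h
  exact left_eq_mul.mp h

theorem one_tmul (g : G) : tmul (1 : G) g = 1 := by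
  have h := tmul_rel₁ 1 1 g
  simp only [one_mul, mul_one, inv_one] at h
  exact left_eq_mul.mp h

theorem tmul_pow_self (x : G) (a : ℕ) : tmul (x ^ a) x = tmul x x ^ a := by
  induction a with
  | zero => simpa using one_tmul x
  | succ a ih =>
    have h := tmul_rel₁ x (x ^ a) x
    rw [show x * x ^ a * x⁻¹ = x ^ a by group, show x * x * x⁻¹ = x by group,
      ← pow_succ'] at h
    rw [h, ih, pow_succ]

theorem tmul_pow_pow (x : G) (a b : ℕ) : tmul (x ^ a) (x ^ b) = tmul x x ^ (a * b) := by
  induction b with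
  | zero => simpa using tmul_one (x ^ a)
  | succ b ih =>
    have h := tmul_rel₂ (x ^ a) (x ^ b) x
    rw [show x ^ b * x ^ a * (x ^ b)⁻¹ = x ^ a by group,
      show x ^ b * x * (x ^ b)⁻¹ = x by group, ← pow_succ] at h
    rw [h, ih, tmul_pow_self, ← pow_add, Nat.mul_succ]

theorem tmul_mul_self (a b : G) :
    tmul (a * b) (a * b) =
      tmul a b * tmul (b * a * b⁻¹) (b * a * b⁻¹) *
        (tmul b a * tmul (a * b * a⁻¹) (a * b * a⁻¹)) := by
  have h := tmul_rel₁ b (b⁻¹ * a * b) (a * b)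
  rw [show b * (b⁻¹ * a * b) * b⁻¹ = a by group, show b * (a * b) * b⁻¹ = b * a by group,
    show b * (b⁻¹ * a * b) = a * b by group] at h
  rw [h, tmul_rel₂ a b a, tmul_rel₂ b a b]

theorem tmul_self_mem_nabla (x : G) : tmul x x ∈ nabla G :=
  Subgroup.subset_normalClosure ⟨x, rfl⟩

theorem tmul_mul_tmul_mem_delta (x y : G) : tmul x y * tmul y x ∈ delta G :=
  Subgroup.subset_normalClosure ⟨x, y, rfl⟩

theorem emul_self (x : G) : emul x x = 1 :=
  (QuotientGroup.eq_one_iff _).mpr (tmul_self_mem_nabla x)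

theorem delta_le_nabla : delta G ≤ nabla G := by
  refine Subgroup.normalClosure_le_normal ?_
  rintro _ ⟨a, b, rfl⟩
  have h := congrArg (QuotientGroup.mk' (nabla G)) (tmul_mul_self a b)
  simp only [map_mul, ← emul.eq_1, emul_self, mul_one] at h
  exact (QuotientGroup.eq_one_iff _).mp h.symm

theorem nabla_le_delta_of_forall_tmul_self_mem (h : ∀ x : G, tmul x x ∈ delta G) :
    nabla G ≤ delta G :=
  Subgroup.normalClosure_le_normal (by rintro _ ⟨x, rfl⟩; exact h x)

theorem tmul_self_mem_delta_of_pow_odd {x : G} {k : ℕ} (hk : Odd k) (hx : tmul x x ^ k = 1) :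
    tmul x x ∈ delta G :=
  Subgroup.mem_of_mul_self_mem_of_pow_odd hk hx (tmul_mul_tmul_mem_delta x x)

theorem tmul_pow_self_mem_delta_of_even (x : G) {n : ℕ} (hn : Even n) :
    tmul (x ^ n) (x ^ n) ∈ delta G := by
  obtain ⟨m, rfl⟩ := hn
  rw [tmul_pow_pow, show (m + m) * (m + m) = 2 * ((m + m) * m) by ring, pow_mul, sq]
  exact pow_mem (tmul_mul_tmul_mem_delta x x) _

variable (G)

theorem M_eq_map_J : M G = (J G).map (QuotientGroup.mk' (nabla G)) :=
  QuotientGroup.ker_lift _ _ _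

theorem nonempty_Jt_mulEquiv_M_of_nabla_eq_delta (h : nabla G = delta G) :
    Nonempty (Jt G ≃* M G) := by
  obtain ⟨e⟩ := Subgroup.nonempty_map_mk'_mulEquiv_of_eq h.symm (J G)
  exact ⟨e.trans (MulEquiv.subgroupCongr (M_eq_map_J G).symm)⟩

end NATensor

open NATensor in
/-- if (a) there is an odd (positive) integer `k` with `(g ⊗ g)^k = 1` for all
`g ∈ G`, or (b) there is an even positive integer `n` such that every element of `G` is an
`n`-th power, then `∇(G) = Δ(G)`; consequently `J̃(G) ≅ M(G)`, i.e.
`π₂ˢ(K(G,1)) ≅ H₂(G)` (in particular this holds when `G` has odd exponent). -/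
theorem nabla_eq_delta_of_odd_power_or_even_roots (G : Type*) [Group G]
    (h : (∃ k : ℕ, Odd k ∧ ∀ g : G, (tmul g g) ^ k = 1) ∨
         (∃ n : ℕ, Even n ∧ 0 < n ∧ ∀ g : G, ∃ x : G, x ^ n = g)) :
    nabla G = delta G ∧ Nonempty (↥(Jt G) ≃* ↥(M G)) := by
  have hnd : nabla G = delta G := by
    refine le_antisymm (nabla_le_delta_of_forall_tmul_self_mem fun g => ?_) delta_le_nabla
    rcases h with ⟨k, hk, hpow⟩ | ⟨n, hn, -, hroot⟩
    · exact tmul_self_mem_delta_of_pow_odd hk (hpow g)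
    · obtain ⟨x, rfl⟩ := hroot g
      exact tmul_pow_self_mem_delta_of_even x hn
  exact ⟨hnd, nonempty_Jt_mulEquiv_M_of_nabla_eq_delta G hnd⟩
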